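/- arXiv:2112.11818 — 2 statements merged into one kernel-verified Lean document; each statement's English description precedes it below -/
import Mathlib

section
/- Let β > 0, let 0 < r̲ and let μ, r̃ be reals with μ ≥ r̲ and r̃ ≥ 0. If |r̃ − μ| ≤ Δ where 0 ≤ Δ < (1 + β·r̲)/(4β), then |ln(1 + β·r̃) − ln(1 + β·μ)| ≤ 4βΔ / (3(1 + β·r̲)). -/
lemma log_sub_le_div {x y : ℝ} (hx : 0 < x) (hxy : x ≤ y) :
    Real.log y - Real.log x ≤ (y - x) / x := by
  have hy : 0 < y := lt_of_lt_of_le hx hxy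
  have h1 : Real.log y - Real.log x = Real.log (y / x) := (Real.log_div hy.ne' hx.ne').symm
  rw [h1]
  have h2 : Real.log (y / x) ≤ y / x - 1 :=
    Real.log_le_sub_one_of_pos (div_pos hy hx)
  have h3 : y / x - 1 = (y - x) / x := by field_simp
  linarith

lemma abs_log_sub_le {a b c : ℝ} (hc : 0 < c) (hca : c ≤ a) (hcb : c ≤ b) :
    |Real.log a - Real.log b| ≤ |a - b| / c := by
  have ha : 0 < a := lt_of_lt_of_le hc hca
  have hb : 0 < b := lt_of_lt_of_le hc hcb
  rcases le_total a b with h | h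
  · have h1 : Real.log b - Real.log a ≤ (b - a) / a := log_sub_le_div ha h
    have h2 : (b - a) / a ≤ (b - a) / c := div_le_div_of_nonneg_left (by linarith) hc hca
    have hmono : Real.log a ≤ Real.log b := Real.log_le_log ha h
    have habs : |a - b| = b - a := by rw [abs_sub_comm]; exact abs_of_nonneg (by linarith)
    rw [habs, abs_of_nonpos (by linarith)]
    linarith
  · have h1 : Real.log a - Real.log b ≤ (a - b) / b := log_sub_le_div hb h
    have h2 : (a - b) / b ≤ (a - b) / c := div_le_div_of_nonneg_left (by linarith) hc hcb
    have hmono : Real.log b ≤ Real.log a := Real.log_le_log hb h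
    rw [abs_of_nonneg (show (0:ℝ) ≤ a - b by linarith), abs_of_nonneg (by linarith)]
    linarith

theorem fairness_error_bound (β rlb μ rt Δ : ℝ)
    (hβ : 0 < β) (hrlb : 0 < rlb) (hμ : rlb ≤ μ) (hrt : 0 ≤ rt)
    (hΔ0 : 0 ≤ Δ) (hΔ : Δ < (1 + β * rlb) / (4 * β))
    (herr : |rt - μ| ≤ Δ) :
    |Real.log (1 + β * rt) - Real.log (1 + β * μ)| ≤ 4 * β * Δ / (3 * (1 + β * rlb)) := by
  have hβ4 : 0 < 4 * β := by linarith
  have hΔ' : β * Δ < (1 + β * rlb) / 4 := by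
    have := (lt_div_iff₀ hβ4).mp hΔ; nlinarith
  obtain ⟨herr2, herr1⟩ := abs_le.mp herr
  set a := 1 + β * rt with ha
  set b := 1 + β * μ with hb
  set c := 1 + β * rlb - β * Δ with hc
  have hlb : 0 < 1 + β * rlb := by nlinarith
  have hcpos : 0 < c := by rw [hc]; nlinarith
  have hc34 : 3 * (1 + β * rlb) / 4 ≤ c := by rw [hc]; nlinarith
  have hca : c ≤ a := by rw [hc, ha]; nlinarith
  have hcb : c ≤ b := by rw [hc, hb]; nlinarith
  have hab : |a - b| ≤ β * Δ := by
    have h1 : a - b = β * (rt - μ) := by rw [ha, hb]; ring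
    rw [h1, abs_mul, abs_of_pos hβ]
    nlinarith [abs_le.mpr ⟨herr2, herr1⟩]
  have key : |Real.log a - Real.log b| ≤ |a - b| / c := abs_log_sub_le hcpos hca hcb
  have step : |a - b| / c ≤ β * Δ / c := by gcongr
  have final : β * Δ / c ≤ 4 * β * Δ / (3 * (1 + β * rlb)) := by
    rw [div_le_div_iff₀ hcpos (by positivity)]
    nlinarith [mul_nonneg (mul_nonneg hβ.le hΔ0) (sub_nonneg.mpr hc34)]
  linarith
end

section
/- Let the reward estimation error satisfy |r̃(i,j) − μ(i,j)| ≤ 3Δ_min/(8N) for all users i ∈ {1,…,N} and servers j ∈ {1,…,K}, and suppose the assignment a' output by the auction satisfies Σᵢ r̃(i, a'(i)) ≥ Σᵢ r̃(i, a⁽ⁿ⁾(i)) − Δ_min/5, where a⁽ⁿ⁾ is optimal under r̃ among feasible assignments. If a* is optimal under μ with uniqueness gap Δ_min (i.e., Σᵢ μ(i,a*(i)) − Σᵢ μ(i,a(i)) ≥ Δ_min for all feasible a ≠ a*), then a' = a*. -/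
/-!
Summing the per-entry error over the `N` users, the total reward of any assignment under the
estimate `r̃` is within `3Δ_min/8` of its total under `μ`. Hence, if `a' ≠ a*`, the gap
`Δ_min ≤ Σ μ(a*) - Σ μ(a')` is at most `3Δ_min/8 + (Σ r̃(a⁽ⁿ⁾) - Σ r̃(a')) + 3Δ_min/8`, using
`Σ r̃(a*) ≤ Σ r̃(a⁽ⁿ⁾)`, and so at most `3Δ_min/4 + Δ_min/5 < Δ_min`.
-/

open Finset

theorem abs_sum_sub_sum_le_of_abs_sub_le_div_card {ι : Type*} [Fintype ι] {f g : ι → ℝ}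
    {δ : ℝ} (hδ : 0 ≤ δ) (h : ∀ i, |f i - g i| ≤ δ / Fintype.card ι) :
    |∑ i, f i - ∑ i, g i| ≤ δ := by
  calc |∑ i, f i - ∑ i, g i| = |∑ i, (f i - g i)| := by rw [sum_sub_distrib]
    _ ≤ ∑ i, |f i - g i| := abs_sum_le_sum_abs _ _
    _ ≤ ∑ _i : ι, δ / Fintype.card ι := sum_le_sum fun i _ => h i
    _ = Fintype.card ι * (δ / Fintype.card ι) := by simp
    _ ≤ δ := by
      rcases eq_or_ne (Fintype.card ι : ℝ) 0 with hcard | hcard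
      · simpa [hcard] using hδ
      · rw [mul_div_cancel₀ _ hcard]

theorem eq_of_near_optimal_of_gap {α : Type*} {Feasible : α → Prop} {U V : α → ℝ}
    {δ η Δ : ℝ} {a b : α} (hUV : ∀ x, |U x - V x| ≤ δ) (ha : Feasible a)
    (hnear : V b - η ≤ V a) (hgap : ∀ x, Feasible x → x ≠ b → U b - U x ≥ Δ)
    (hlt : 2 * δ + η < Δ) : a = b := by
  by_contra hab
  have hb := abs_le.mp (hUV b)
  have ha' := abs_le.mp (hUV a)
  linarith [hgap a ha hab]

theorem debo_assignment_optimal_general (N K : ℕ)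
    (μ rt : Fin N → Fin K → ℝ) (Feasible : (Fin N → Fin K) → Prop)
    (Δmin : ℝ) (hΔ : 0 < Δmin)
    (herr : ∀ i j, |rt i j - μ i j| ≤ 3 * Δmin / (8 * N))
    (an astar a' : Fin N → Fin K)
    (hastar : Feasible astar) (ha' : Feasible a')
    (hanopt : ∀ a, Feasible a → (∑ i, rt i (an i)) ≥ ∑ i, rt i (a i))
    (hmatch : (∑ i, rt i (a' i)) ≥ (∑ i, rt i (an i)) - Δmin / 5)
    (hgap : ∀ a, Feasible a → a ≠ astar →
      (∑ i, μ i (astar i)) - (∑ i, μ i (a i)) ≥ Δmin) :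
    a' = astar := by
  have hsum_err (a : Fin N → Fin K) :
      |∑ i, μ i (a i) - ∑ i, rt i (a i)| ≤ 3 * Δmin / 8 :=
    abs_sum_sub_sum_le_of_abs_sub_le_div_card (by positivity) fun i => by
      rw [abs_sub_comm, Fintype.card_fin, div_div]
      exact herr i (a i)
  refine eq_of_near_optimal_of_gap hsum_err ha' (η := Δmin / 5) ?_ hgap (by linarith)
  linarith [hanopt astar hastar]

theorem debo_assignment_optimal (N K : ℕ) (hN : 0 < N) (hK : 0 < K)
    (μ rt : Fin N → Fin K → ℝ) (Feasible : (Fin N → Fin K) → Prop)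
    (Δmin : ℝ) (hΔ : 0 < Δmin)
    (herr : ∀ i j, |rt i j - μ i j| ≤ 3 * Δmin / (8 * N))
    (an astar a' : Fin N → Fin K)
    (han : Feasible an) (hastar : Feasible astar) (ha' : Feasible a')
    (hanopt : ∀ a, Feasible a → (∑ i, rt i (an i)) ≥ ∑ i, rt i (a i))
    (hmatch : (∑ i, rt i (a' i)) ≥ (∑ i, rt i (an i)) - Δmin / 5)
    (hgap : ∀ a, Feasible a → a ≠ astar →
      (∑ i, μ i (astar i)) - (∑ i, μ i (a i)) ≥ Δmin) :
    a' = astar :=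
  debo_assignment_optimal_general N K μ rt Feasible Δmin hΔ herr an astar a' hastar ha' hanopt
    hmatch hgap
end
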